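/- Let K be an infinite field and n, r ≥ 1. Let s ∈ {1,…,n} and t ∈ ℤ. (i) If t ≠ s, then D_{s,t} = Σ_{i∈R'} ξ_{i⌢s, i⌢t}, where R' ⊆ I(n,r−1) is any set containing exactly one element of each orbit of the place-permutation action of Σ_{r−1} on I(n,r−1), and i⌢z denotes the r-tuple obtained by appending z ∈ ℤ to i. (ii) D_{s,s} = Σ_{i∈R} λ_{i,s} · ξ_{i,i}, where R ⊆ I(n,r) is any set containing exactly one element of each Σ_r-orbit of I(n,r) and λ_{i,s} ∈ ℕ is the number of entries of i equal to s, cast into K. (Both R' and R are finite.) -/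

import Mathlib

noncomputable section

namespace AffineSchur

variable (K : Type*) [Field K] (n r : ℕ)

/-- The right action of the pair `(σ,ε) ∈ Σ̂_r = Σ_r ⋉ ℤ^r` on `I(ℤ,r)`:
`i·(σ,ε) = i∘σ + n·ε`. -/
def act (σ : Equiv.Perm (Fin r)) (ε : Fin r → ℤ) (i : Fin r → ℤ) : Fin r → ℤ :=
  fun k => i (σ k) + n * ε k

/-- The tensor space `Ẽ^{⊗r}`: the free `K`-module with basis `(v_i)_{i ∈ I(ℤ,r)}`. -/
abbrev TensorSpace := (Fin r → ℤ) →₀ K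

/-- The right-translation operator `T_{σ,ε} : v_i ↦ v_{i·(σ,ε)}`. -/
def transOp (σ : Equiv.Perm (Fin r)) (ε : Fin r → ℤ) :
    Module.End K (TensorSpace K r) :=
  Finsupp.lmapDomain K K (act n r σ ε)

/-- The finite set `{k : (k,l) lies in the Σ̂_r-orbit of (i,j)}`. -/
def xiSupport (i j l : Fin r → ℤ) : Finset (Fin r → ℤ) := by
  classical
  exact (Finset.univ.filter fun σ : Equiv.Perm (Fin r) =>
      ∀ k, (n : ℤ) ∣ (l k - j (σ k))).image
    fun σ => fun k => i (σ k) + (l k - j (σ k))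

/-- The operator `ξ_{i,j} ∈ End_K(Ẽ^{⊗r})` given by
`ξ_{i,j}(v_l) = Σ_{k : (k,l) in the Σ̂_r-orbit of (i,j)} v_k`. -/
def xi (i j : Fin r → ℤ) : Module.End K (TensorSpace K r) :=
  Finsupp.lsum K fun l => LinearMap.toSpanSingleton K _
    (∑ k ∈ xiSupport n r i j l, Finsupp.single k (1 : K))

/-- The centralizer algebra `End_{KΣ̂_r}(Ẽ^{⊗r})` of all the translation operators
`T_{σ,ε}` inside `End_K(Ẽ^{⊗r})` — the affine Schur algebra `S̃(n,r)`. -/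
def affineSchur : Subalgebra K (Module.End K (TensorSpace K r)) :=
  Subalgebra.centralizer K
    (Set.range fun p : Equiv.Perm (Fin r) × (Fin r → ℤ) => transOp K n r p.1 p.2)


/-- The operator D_{s,t} ∈ End_K(Ẽ^{⊗r}) (the action of the loop-algebra element
E_{st} ∈ gl_n[t,t⁻¹]): D_{s,t}(v_q) = Σ_{k=1}^{r} [q_k ≡ t (mod n)] · v_{q^k}, where q^k
is obtained from q by replacing its k-th entry q_k by q_k + s − t. -/
def Dop (s t : ℤ) : Module.End K (TensorSpace K r) := by
  classical
  exact Finsupp.lsum K fun q => LinearMap.toSpanSingleton K _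
    (∑ k : Fin r, if (n : ℤ) ∣ (q k - t) then
        Finsupp.single (Function.update q k (q k + s - t)) (1 : K) else 0)

/-- Appending an integer z to a tuple i ∈ I(ℤ,r−1), giving a tuple in I(ℤ,r)
(z is placed at the last position). -/
def app (i : Fin (r - 1) → ℤ) (z : ℤ) : Fin r → ℤ :=
  fun k => if h : (k : ℕ) < r - 1 then i ⟨k, h⟩ else z

/-!
On a basis vector `v_l`, `ξ_{i,j}` yields the vectors `i∘σ + (l − j∘σ)` over the permutations
`σ` with `l ≡ j∘σ (mod n)`; reducing entries to their representatives in `{1,…,n}` turns this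
congruence into the equation `res ∘ l = res ∘ j∘σ`. For `(i⌢s, i⌢t)` with `t ≠ s` such a vector
is `l` with its entry in position `k = σ⁻¹(r)` shifted by `s − t`, and a `σ` with `σ⁻¹(r) = k`
exists exactly when `l_k ≡ t` and `i` is a rearrangement of the residues of `l` off position `k`;
so each term of `D_{s,t}(v_l)` is produced by exactly one representative in `R'`. For `(i,i)` the
only vector is `l`, produced exactly when `i` is a rearrangement of the residues of `l`, and for
that unique `i ∈ R` the count `λ_{i,s}` is the number of positions `k` with `l_k ≡ s`.
-/

open Finset Function Equiv

/-- The representative of `z` modulo `n` in `{1, …, n}`. -/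
def res (n : ℕ) (z : ℤ) : ℤ := (z - 1) % n + 1

theorem res_eq_res_iff {n : ℕ} {a b : ℤ} : res n a = res n b ↔ (n : ℤ) ∣ a - b := by
  rw [res, res, add_left_inj, ← Int.ModEq, Int.modEq_iff_dvd, dvd_sub_comm,
    sub_sub_sub_cancel_right]

theorem res_of_mem {n : ℕ} {a : ℤ} (h1 : 1 ≤ a) (h2 : a ≤ n) : res n a = a := by
  rw [res, Int.emod_eq_of_lt (by omega) (by omega), sub_add_cancel]

theorem res_mem {n : ℕ} (hn : 1 ≤ n) (z : ℤ) : 1 ≤ res n z ∧ res n z ≤ n := by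
  have hn' : (0 : ℤ) < n := by exact_mod_cast hn
  have := Int.emod_nonneg (z - 1) hn'.ne'
  have := Int.emod_lt_of_pos (z - 1) hn'
  constructor <;> simp only [res] <;> omega

theorem dvd_sub_iff_res_eq {n : ℕ} {a b : ℤ} (h1 : 1 ≤ b) (h2 : b ≤ n) :
    (n : ℤ) ∣ a - b ↔ res n a = b := by
  rw [← res_eq_res_iff, res_of_mem h1 h2]

theorem forall_dvd_sub_iff {ι : Type*} {n : ℕ} (x y : ι → ℤ) :
    (∀ k, (n : ℤ) ∣ x k - y k) ↔ res n ∘ x = res n ∘ y := by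
  simp only [funext_iff, comp_apply, res_eq_res_iff]

theorem exists_perm_eq_comp_comm {ι α : Type*} (x y : ι → α) :
    (∃ σ : Perm ι, x = y ∘ σ) ↔ ∃ σ : Perm ι, y = x ∘ σ := by
  constructor <;> rintro ⟨σ, rfl⟩ <;> exact ⟨σ.symm, by ext; simp⟩

theorem sum_ite_eq_of_mem_of_unique {ι M : Type*} [AddCommMonoid M] (R : Finset ι)
    (p : ι → Prop) [DecidablePred p] {i₀ : ι} (hi₀ : i₀ ∈ R) (hp : p i₀)
    (huniq : ∀ i ∈ R, p i → i = i₀) (f : ι → M) :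
    ∑ i ∈ R, (if p i then f i else 0) = f i₀ := by
  rw [sum_eq_single_of_mem i₀ hi₀ fun i hi hne => if_neg fun h => hne (huniq i hi h),
    if_pos hp]

theorem app_succ {m : ℕ} (a : Fin m → ℤ) (z : ℤ) : app (m + 1) a z = Fin.snoc a z := by
  ext k
  refine Fin.lastCases ?_ (fun q => ?_) k <;> simp [app]

section Perm

variable {m : ℕ} {k : Fin (m + 1)}

theorem exists_perm_apply_succAbove_of_apply_eq_last {σ : Perm (Fin (m + 1))}
    (hσ : σ k = Fin.last m) :
    ∃ π : Perm (Fin m), ∀ q, σ (k.succAbove (π q)) = q.castSucc := by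
  let f (j : Fin m) : Fin m :=
    (σ (k.succAbove j)).castPred (by rw [← hσ, σ.injective.ne_iff]; exact k.succAbove_ne j)
  have hf : Injective f := fun j j' h => by
    simpa [f, Fin.castPred_inj, σ.injective.eq_iff, Fin.succAbove_right_inj] using h
  let e := Equiv.ofBijective f hf.bijective_of_finite
  refine ⟨e.symm, fun q => ?_⟩
  have h := congrArg Fin.castSucc (e.apply_symm_apply q)
  rwa [ofBijective_apply, Fin.castSucc_castPred] at h

theorem exists_perm_apply_eq_last (π : Perm (Fin m)) :
    ∃ σ : Perm (Fin (m + 1)), σ k = Fin.last m ∧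
      ∀ q, σ (k.succAbove (π q)) = q.castSucc := by
  obtain ⟨σ, hσ⟩ := Perm.exists_extending_pair (k.succAbove ∘ π) Fin.castSucc
    ((Fin.succAbove_right_injective).comp π.injective) (Fin.castSucc_injective m)
  refine ⟨σ, ?_, hσ⟩
  rcases Fin.eq_castSucc_or_eq_last (σ k) with ⟨q, hq⟩ | h
  · rw [← hσ q, σ.injective.eq_iff] at hq
    exact absurd hq.symm (k.succAbove_ne _)
  · exact h

theorem exists_perm_eq_snoc_comp_iff {α : Type*} (x : Fin (m + 1) → α) (y : Fin m → α)
    (z : α) :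
    (∃ σ : Perm (Fin (m + 1)), σ k = Fin.last m ∧ x = Fin.snoc y z ∘ σ) ↔
      x k = z ∧ ∃ π : Perm (Fin m), y = x ∘ k.succAbove ∘ π := by
  constructor
  · rintro ⟨σ, hσk, rfl⟩
    obtain ⟨π, hπ⟩ := exists_perm_apply_succAbove_of_apply_eq_last hσk
    exact ⟨by simp [hσk], π, funext fun q => by simp [hπ]⟩
  · rintro ⟨hxk, π, rfl⟩
    obtain ⟨σ, hσk, hπ⟩ := exists_perm_apply_eq_last (k := k) π
    refine ⟨σ, hσk, funext fun k' => ?_⟩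
    rcases Fin.eq_self_or_eq_succAbove k k' with rfl | ⟨j, rfl⟩
    · simp [hσk, hxk]
    · simpa using congrArg (Fin.snoc (x ∘ k.succAbove ∘ π) z) (hπ (π.symm j)).symm

end Perm

theorem mem_xiSupport {n r : ℕ} {i j l m : Fin r → ℤ} :
    m ∈ xiSupport n r i j l ↔ ∃ σ : Perm (Fin r),
      (∀ k, (n : ℤ) ∣ l k - j (σ k)) ∧ m = fun k => i (σ k) + (l k - j (σ k)) := by
  simp [xiSupport, eq_comm]

theorem xiSupport_self {n r : ℕ} (i l : Fin r → ℤ) :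
    xiSupport n r i i l =
      if ∃ σ : Perm (Fin r), ∀ k, (n : ℤ) ∣ l k - i (σ k) then {l} else ∅ := by
  ext m
  rw [mem_xiSupport]
  split_ifs with h <;> simp_all

theorem update_eq_snoc_comp_add {m : ℕ} {k : Fin (m + 1)} {σ : Perm (Fin (m + 1))}
    (hσ : σ k = Fin.last m) (a : Fin m → ℤ) (s t : ℤ) (l : Fin (m + 1) → ℤ) :
    update l k (l k + s - t) = Fin.snoc a s ∘ σ + (l - Fin.snoc a t ∘ σ) := by
  funext k'
  simp only [Pi.add_apply, Pi.sub_apply, comp_apply]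
  rcases eq_or_ne k' k with rfl | hk
  · simp [hσ]; ring
  · obtain ⟨q, hq⟩ | h := Fin.eq_castSucc_or_eq_last (σ k')
    · simp [hk, hq]
    · exact absurd (σ.injective (h.trans hσ.symm)) hk

theorem xiSupport_snoc {n m : ℕ} (a : Fin m → ℤ) (s t : ℤ) (l : Fin (m + 1) → ℤ) :
    xiSupport n (m + 1) (Fin.snoc a s) (Fin.snoc a t) l =
      (univ.filter fun k => ∃ σ : Perm (Fin (m + 1)), σ k = Fin.last m ∧
        ∀ k', (n : ℤ) ∣ l k' - (Fin.snoc a t : Fin (m + 1) → ℤ) (σ k')).image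
        fun k => update l k (l k + s - t) := by
  ext m'
  simp only [mem_xiSupport, mem_image, mem_filter, mem_univ, true_and]
  constructor
  · rintro ⟨σ, hdvd, rfl⟩
    exact ⟨σ.symm (Fin.last m), ⟨σ, by simp, hdvd⟩,
      update_eq_snoc_comp_add (by simp) a s t l⟩
  · rintro ⟨k, ⟨σ, hσ, hdvd⟩, rfl⟩
    exact ⟨σ, hdvd, update_eq_snoc_comp_add hσ a s t l⟩

theorem exists_perm_dvd_sub_snoc_iff {n m : ℕ} {a : Fin m → ℤ}
    (ha : ∀ q, 1 ≤ a q ∧ a q ≤ (n : ℤ)) (t : ℤ) (l : Fin (m + 1) → ℤ)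
    (k : Fin (m + 1)) :
    (∃ σ : Perm (Fin (m + 1)), σ k = Fin.last m ∧
        ∀ k', (n : ℤ) ∣ l k' - (Fin.snoc a t : Fin (m + 1) → ℤ) (σ k')) ↔
      (n : ℤ) ∣ l k - t ∧ ∃ π : Perm (Fin m), a = res n ∘ l ∘ k.succAbove ∘ π := by
  have hres_snoc : res n ∘ Fin.snoc a t = Fin.snoc a (res n t) := by
    rw [Fin.comp_snoc]
    congr 1
    exact funext fun q => res_of_mem (ha q).1 (ha q).2
  have hdvd (σ : Perm (Fin (m + 1))) :
      (∀ k', (n : ℤ) ∣ l k' - (Fin.snoc a t : Fin (m + 1) → ℤ) (σ k')) ↔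
        res n ∘ l = Fin.snoc a (res n t) ∘ σ := by
    rw [← hres_snoc]
    exact forall_dvd_sub_iff l (Fin.snoc a t ∘ σ)
  simp_rw [hdvd, exists_perm_eq_snoc_comp_iff, comp_apply, res_eq_res_iff]
  rfl

theorem update_add_sub_injective {ι : Type*} [DecidableEq ι] {s t : ℤ} (hst : t ≠ s)
    (l : ι → ℤ) : Injective fun k => update l k (l k + s - t) := fun k k' h => by
  by_contra hne
  have := congrFun h k'
  simp only [update_self, update_of_ne (Ne.symm hne)] at this
  omega

theorem Dop_single {n r : ℕ} (s t : ℤ) (l : Fin r → ℤ) (b : K) :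
    Dop K n r s t (Finsupp.single l b) =
      b • ∑ k ∈ univ.filter fun k => (n : ℤ) ∣ l k - t,
        Finsupp.single (update l k (l k + s - t)) (1 : K) := by
  simp [Dop, sum_filter]

theorem xi_single {n r : ℕ} (i j l : Fin r → ℤ) (b : K) :
    xi K n r i j (Finsupp.single l b) =
      b • ∑ m ∈ xiSupport n r i j l, Finsupp.single m (1 : K) := by
  simp [xi]

theorem sum_xiSupport_snoc {n m : ℕ} (hn : 1 ≤ n) {s t : ℤ} (hst : t ≠ s)
    (R' : Finset (Fin m → ℤ)) (hR' : ∀ a ∈ R', ∀ q, 1 ≤ a q ∧ a q ≤ (n : ℤ))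
    (hrep : ∀ j : Fin m → ℤ, (∀ q, 1 ≤ j q ∧ j q ≤ (n : ℤ)) →
      ∃! a, a ∈ R' ∧ ∃ π : Perm (Fin m), a = j ∘ π)
    (l : Fin (m + 1) → ℤ) :
    ∑ a ∈ R', ∑ m' ∈ xiSupport n (m + 1) (Fin.snoc a s) (Fin.snoc a t) l,
        Finsupp.single m' (1 : K) =
      ∑ k ∈ univ.filter fun k => (n : ℤ) ∣ l k - t,
        Finsupp.single (update l k (l k + s - t)) (1 : K) := by
  have hcount (k : Fin (m + 1)) :
      ∑ a ∈ R', (if ∃ σ : Perm (Fin (m + 1)), σ k = Fin.last m ∧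
          ∀ k', (n : ℤ) ∣ l k' - (Fin.snoc a t : Fin (m + 1) → ℤ) (σ k')
        then Finsupp.single (update l k (l k + s - t)) (1 : K) else 0) =
        if (n : ℤ) ∣ l k - t then Finsupp.single (update l k (l k + s - t)) (1 : K)
        else 0 := by
    have hmem (a) (ha : a ∈ R') := exists_perm_dvd_sub_snoc_iff (hR' a ha) t l k
    by_cases hk : (n : ℤ) ∣ l k - t
    · obtain ⟨a₀, ⟨ha₀, hrel⟩, huniq⟩ :=
        hrep (res n ∘ l ∘ k.succAbove) fun q => res_mem hn _
      rw [if_pos hk]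
      exact sum_ite_eq_of_mem_of_unique R' _ ha₀ ((hmem a₀ ha₀).2 ⟨hk, hrel⟩)
        (fun a ha h => huniq a ⟨ha, ((hmem a ha).1 h).2⟩) _
    · rw [if_neg hk]
      exact sum_eq_zero fun a ha => if_neg fun h => hk ((hmem a ha).1 h).1
  simp_rw [xiSupport_snoc, sum_image (update_add_sub_injective hst l).injOn, sum_filter]
  rw [sum_comm]
  exact sum_congr rfl fun k _ => hcount k

theorem sum_xiSupport_self {n r : ℕ} (hn : 1 ≤ n) {s : ℤ} (hs1 : 1 ≤ s)
    (hs2 : s ≤ (n : ℤ))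
    (R : Finset (Fin r → ℤ)) (hR : ∀ i ∈ R, ∀ k, 1 ≤ i k ∧ i k ≤ (n : ℤ))
    (hrep : ∀ j : Fin r → ℤ, (∀ k, 1 ≤ j k ∧ j k ≤ (n : ℤ)) →
      ∃! i, i ∈ R ∧ ∃ σ : Perm (Fin r), i = j ∘ σ)
    (l : Fin r → ℤ) :
    ∑ i ∈ R, ((univ.filter fun k => i k = s).card : K) •
        ∑ m ∈ xiSupport n r i i l, Finsupp.single m (1 : K) =
      ((univ.filter fun k => (n : ℤ) ∣ l k - s).card : K) • Finsupp.single l (1 : K) := by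
  have hmem (i) (hi : i ∈ R) :
      (∃ σ : Perm (Fin r), ∀ k, (n : ℤ) ∣ l k - i (σ k)) ↔
        ∃ π : Perm (Fin r), i = res n ∘ l ∘ π := by
    have hdvd (σ : Perm (Fin r)) :
        (∀ k, (n : ℤ) ∣ l k - i (σ k)) ↔ res n ∘ l = i ∘ σ := by
      rw [forall_dvd_sub_iff l fun k => i (σ k)]
      exact Eq.congr_right (funext fun k => res_of_mem (hR i hi (σ k)).1 (hR i hi (σ k)).2)
    simp_rw [hdvd]
    exact exists_perm_eq_comp_comm _ _
  obtain ⟨i₀, ⟨hi₀, π, hπ⟩, huniq⟩ := hrep (res n ∘ l) fun k => res_mem hn _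
  have hcard : (univ.filter fun k => i₀ k = s).card =
      (univ.filter fun k => (n : ℤ) ∣ l k - s).card :=
    card_equiv π fun k => by simp [hπ, dvd_sub_iff_res_eq hs1 hs2]
  simp_rw [xiSupport_self, apply_ite (fun S => ∑ m ∈ S, Finsupp.single m (1 : K)),
    sum_singleton, sum_empty, smul_ite, smul_zero]
  rw [sum_ite_eq_of_mem_of_unique R _ hi₀ ((hmem i₀ hi₀).2 ⟨π, hπ⟩)
    (fun i hi h => huniq i ⟨hi, (hmem i hi).1 h⟩), hcard]

theorem Dop_eq_sum_xi_snoc {n m : ℕ} (hn : 1 ≤ n) {s t : ℤ} (hst : t ≠ s)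
    (R' : Finset (Fin m → ℤ)) (hR' : ∀ a ∈ R', ∀ q, 1 ≤ a q ∧ a q ≤ (n : ℤ))
    (hrep : ∀ j : Fin m → ℤ, (∀ q, 1 ≤ j q ∧ j q ≤ (n : ℤ)) →
      ∃! a, a ∈ R' ∧ ∃ π : Perm (Fin m), a = j ∘ π) :
    Dop K n (m + 1) s t = ∑ a ∈ R', xi K n (m + 1) (Fin.snoc a s) (Fin.snoc a t) := by
  refine Finsupp.lhom_ext fun l b => ?_
  rw [LinearMap.sum_apply, Dop_single]
  simp_rw [xi_single, ← smul_sum, sum_xiSupport_snoc K hn hst R' hR' hrep l]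

theorem Dop_self_eq_sum_xi {n r : ℕ} (hn : 1 ≤ n) {s : ℤ} (hs1 : 1 ≤ s)
    (hs2 : s ≤ (n : ℤ))
    (R : Finset (Fin r → ℤ)) (hR : ∀ i ∈ R, ∀ k, 1 ≤ i k ∧ i k ≤ (n : ℤ))
    (hrep : ∀ j : Fin r → ℤ, (∀ k, 1 ≤ j k ∧ j k ≤ (n : ℤ)) →
      ∃! i, i ∈ R ∧ ∃ σ : Perm (Fin r), i = j ∘ σ) :
    Dop K n r s s = ∑ i ∈ R, ((univ.filter fun k => i k = s).card : K) • xi K n r i i := by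
  refine Finsupp.lhom_ext fun l b => ?_
  rw [LinearMap.sum_apply, Dop_single]
  simp_rw [LinearMap.smul_apply, xi_single, smul_comm _ b, ← smul_sum,
    sum_xiSupport_self K hn hs1 hs2 R hR hrep l, add_sub_cancel_right, update_eq_self, sum_const,
    Nat.cast_smul_eq_nsmul]

theorem Dop_eq_sum_xi_general (K : Type*) [Field K]
    (n r : ℕ) (hn : 1 ≤ n) (hr : 1 ≤ r)
    (s : ℤ) (hs1 : 1 ≤ s) (hs2 : s ≤ (n : ℤ)) :
    (∀ t : ℤ, t ≠ s →
      ∀ R' : Finset (Fin (r - 1) → ℤ),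
        (∀ i ∈ R', ∀ k, 1 ≤ i k ∧ i k ≤ (n : ℤ)) →
        (∀ j : Fin (r - 1) → ℤ, (∀ k, 1 ≤ j k ∧ j k ≤ (n : ℤ)) →
          ∃! i, i ∈ R' ∧ ∃ σ : Equiv.Perm (Fin (r - 1)), i = j ∘ σ) →
        Dop K n r s t = ∑ i ∈ R', xi K n r (app r i s) (app r i t)) ∧
    (∀ R : Finset (Fin r → ℤ),
      (∀ i ∈ R, ∀ k, 1 ≤ i k ∧ i k ≤ (n : ℤ)) →
      (∀ j : Fin r → ℤ, (∀ k, 1 ≤ j k ∧ j k ≤ (n : ℤ)) →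
        ∃! i, i ∈ R ∧ ∃ σ : Equiv.Perm (Fin r), i = j ∘ σ) →
      Dop K n r s s = ∑ i ∈ R,
        (((Finset.univ.filter fun k => i k = s).card : K)) • xi K n r i i) := by
  obtain ⟨m, rfl⟩ : ∃ m, r = m + 1 := ⟨r - 1, by omega⟩
  refine ⟨fun t hst R' hR' hrep => ?_, Dop_self_eq_sum_xi K hn hs1 hs2⟩
  simp only [app_succ]
  exact Dop_eq_sum_xi_snoc K hn hst R' hR' hrep

/-- for s ∈ {1,…,n} and t ∈ ℤ:
(i) if t ≠ s then D_{s,t} = Σ_{i∈R'} ξ_{i⌢s, i⌢t} for any set R' of representatives of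
the Σ_{r−1}-orbits of I(n,r−1);
(ii) D_{s,s} = Σ_{i∈R} λ_{i,s} ξ_{i,i} for any set R of representatives of the
Σ_r-orbits of I(n,r), where λ_{i,s} is the number of entries of i equal to s. -/
theorem Dop_eq_sum_xi (K : Type*) [Field K] [Infinite K]
    (n r : ℕ) (hn : 1 ≤ n) (hr : 1 ≤ r)
    (s : ℤ) (hs1 : 1 ≤ s) (hs2 : s ≤ (n : ℤ)) :
    (∀ t : ℤ, t ≠ s →
      ∀ R' : Finset (Fin (r - 1) → ℤ),
        (∀ i ∈ R', ∀ k, 1 ≤ i k ∧ i k ≤ (n : ℤ)) →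
        (∀ j : Fin (r - 1) → ℤ, (∀ k, 1 ≤ j k ∧ j k ≤ (n : ℤ)) →
          ∃! i, i ∈ R' ∧ ∃ σ : Equiv.Perm (Fin (r - 1)), i = j ∘ σ) →
        Dop K n r s t = ∑ i ∈ R', xi K n r (app r i s) (app r i t)) ∧
    (∀ R : Finset (Fin r → ℤ),
      (∀ i ∈ R, ∀ k, 1 ≤ i k ∧ i k ≤ (n : ℤ)) →
      (∀ j : Fin r → ℤ, (∀ k, 1 ≤ j k ∧ j k ≤ (n : ℤ)) →
        ∃! i, i ∈ R ∧ ∃ σ : Equiv.Perm (Fin r), i = j ∘ σ) →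
      Dop K n r s s = ∑ i ∈ R,
        (((Finset.univ.filter fun k => i k = s).card : K)) • xi K n r i i) :=
  Dop_eq_sum_xi_general K n r hn hr s hs1 hs2

end AffineSchur
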